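/- Let u, z₁, z₂ be complex numbers with |u| < 1, |z₁| < 1 and |z₂| < 1. Define the Möbius transformation Φ(u,z) = (z - u)/(1 - conj(u)·z) and the normalizing factor Δ(u,z) = (1 - conj(u)·z)/√(1 - |u|²). Then the series Σ_{k=0}^∞ [Φ(u,z₁)·conj(Φ(u,z₂))]^k converges and (1/(Δ(u,z₁)·conj(Δ(u,z₂)))) · Σ_{k=0}^∞ [Φ(u,z₁)·conj(Φ(u,z₂))]^k = 1/(1 - z₁·conj(z₂)); in particular this quantity does not depend on u. -/

import Mathlib

/-! Everything rests on the polynomial identity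
`(1 - ū z₁) conj(1 - ū z₂) - (z₁ - u) conj(z₂ - u) = (1 - |u|²)(1 - z₁ z̄₂)`.
Divided by the two denominators it says `Δ(u,z₁) conj Δ(u,z₂) (1 - Φ(u,z₁) conj Φ(u,z₂)) = 1 - z₁ z̄₂`,
and for `z₁ = z₂` it shows that `Φ(u, ·)` maps the disk into itself, so the series is a convergent
geometric series with sum `(1 - Φ(u,z₁) conj Φ(u,z₂))⁻¹`. -/

open Complex

/-- The Möbius transformation of the unit disk. -/
noncomputable def Phi (u z : ℂ) : ℂ := (z - u) / (1 - (starRingEnd ℂ) u * z)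

/-- The normalizing factor `Δ(u,z) = (1 - conj u * z)/√(1-|u|²)`. -/
noncomputable def Delta (u z : ℂ) : ℂ :=
  (1 - (starRingEnd ℂ) u * z) / (Real.sqrt (1 - ‖u‖ ^ 2) : ℝ)

open ComplexConjugate

theorem one_sub_conj_mul_ne_zero {u z : ℂ} (hu : ‖u‖ ≤ 1) (hz : ‖z‖ < 1) :
    1 - conj u * z ≠ 0 := by
  refine sub_ne_zero.mpr fun h => ?_
  have hlt : ‖conj u * z‖ < 1 := by
    rw [norm_mul, norm_conj]
    exact mul_lt_one_of_nonneg_of_lt_one_right hu (norm_nonneg z) hz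
  rw [← h, norm_one] at hlt
  exact hlt.false

theorem one_sub_conj_mul_mul_conj_sub_sub_mul_conj (u z₁ z₂ : ℂ) :
    (1 - conj u * z₁) * conj (1 - conj u * z₂) - (z₁ - u) * conj (z₂ - u)
      = (1 - normSq u) * (1 - z₁ * conj z₂) := by
  rw [← mul_conj]
  simp only [map_sub, map_one, map_mul, conj_conj]
  ring

theorem normSq_one_sub_conj_mul_sub_normSq_sub (u z : ℂ) :
    normSq (1 - conj u * z) - normSq (z - u) = (1 - normSq u) * (1 - normSq z) := by
  have h := one_sub_conj_mul_mul_conj_sub_sub_mul_conj u z z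
  simp only [mul_conj] at h
  exact_mod_cast h

theorem normSq_lt_one_of_norm_lt_one {z : ℂ} (hz : ‖z‖ < 1) : normSq z < 1 := by
  rw [← Complex.sq_norm]
  exact pow_lt_one₀ (norm_nonneg z) hz two_ne_zero

theorem norm_Phi_lt_one {u z : ℂ} (hu : ‖u‖ < 1) (hz : ‖z‖ < 1) : ‖Phi u z‖ < 1 := by
  rw [Phi, norm_div, div_lt_one (norm_pos_iff.mpr (one_sub_conj_mul_ne_zero hu.le hz)),
    ← sq_lt_sq₀ (norm_nonneg _) (norm_nonneg _), Complex.sq_norm, Complex.sq_norm]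
  have hpos : 0 < (1 - normSq u) * (1 - normSq z) :=
    mul_pos (sub_pos.mpr (normSq_lt_one_of_norm_lt_one hu))
      (sub_pos.mpr (normSq_lt_one_of_norm_lt_one hz))
  linarith [normSq_one_sub_conj_mul_sub_normSq_sub u z]

theorem one_sub_Phi_mul_conj_Phi {u z₁ z₂ : ℂ} (h₁ : 1 - conj u * z₁ ≠ 0)
    (h₂ : 1 - conj u * z₂ ≠ 0) :
    1 - Phi u z₁ * conj (Phi u z₂)
      = (1 - normSq u) * (1 - z₁ * conj z₂) / ((1 - conj u * z₁) * conj (1 - conj u * z₂)) := by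
  have h₂' : conj (1 - conj u * z₂) ≠ 0 := (map_ne_zero _).mpr h₂
  rw [Phi, Phi, map_div₀, div_mul_div_comm, one_sub_div (mul_ne_zero h₁ h₂'),
    one_sub_conj_mul_mul_conj_sub_sub_mul_conj]

theorem Delta_mul_conj_Delta {u : ℂ} (hu : ‖u‖ ≤ 1) (z₁ z₂ : ℂ) :
    Delta u z₁ * conj (Delta u z₂)
      = (1 - conj u * z₁) * conj (1 - conj u * z₂) / (1 - normSq u) := by
  have hsq : 0 ≤ 1 - ‖u‖ ^ 2 := by nlinarith [norm_nonneg u]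
  rw [Delta, Delta, map_div₀, conj_ofReal, div_mul_div_comm, ← ofReal_mul,
    Real.mul_self_sqrt hsq, Complex.sq_norm]
  push_cast
  ring

theorem Delta_mul_conj_Delta_mul_one_sub_Phi_mul_conj_Phi {u z₁ z₂ : ℂ} (hu : ‖u‖ < 1)
    (h₁ : 1 - conj u * z₁ ≠ 0) (h₂ : 1 - conj u * z₂ ≠ 0) :
    Delta u z₁ * conj (Delta u z₂) * (1 - Phi u z₁ * conj (Phi u z₂)) = 1 - z₁ * conj z₂ := by
  have hu' : (1 - normSq u : ℂ) ≠ 0 := by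
    exact_mod_cast (sub_pos.mpr (normSq_lt_one_of_norm_lt_one hu)).ne'
  have h₂' : conj (1 - conj u * z₂) ≠ 0 := (map_ne_zero _).mpr h₂
  rw [Delta_mul_conj_Delta hu.le, one_sub_Phi_mul_conj_Phi h₁ h₂]
  field_simp

/-- For `|u| < 1`, `|z₁| < 1`, `|z₂| < 1`, the geometric series
`Σₖ (Φ(u,z₁) conj(Φ(u,z₂)))^k` converges, and dividing its sum by `Δ(u,z₁) conj(Δ(u,z₂))`
yields `1/(1 - z₁ conj z₂)`, independently of `u`. -/
theorem mobius_covariance_invariance (u z₁ z₂ : ℂ)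
    (hu : ‖u‖ < 1) (h1 : ‖z₁‖ < 1) (h2 : ‖z₂‖ < 1) :
    Summable (fun k : ℕ => (Phi u z₁ * (starRingEnd ℂ) (Phi u z₂)) ^ k) ∧
    (1 / (Delta u z₁ * (starRingEnd ℂ) (Delta u z₂))) *
        ∑' k : ℕ, (Phi u z₁ * (starRingEnd ℂ) (Phi u z₂)) ^ k
      = 1 / (1 - z₁ * (starRingEnd ℂ) z₂) := by
  have hq : ‖Phi u z₁ * conj (Phi u z₂)‖ < 1 := by
    rw [norm_mul, norm_conj]
    exact mul_lt_one_of_nonneg_of_lt_one_left (norm_nonneg _) (norm_Phi_lt_one hu h1)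
      (norm_Phi_lt_one hu h2).le
  refine ⟨summable_geometric_of_norm_lt_one hq, ?_⟩
  rw [tsum_geometric_of_norm_lt_one hq, one_div, one_div, ← mul_inv,
    Delta_mul_conj_Delta_mul_one_sub_Phi_mul_conj_Phi hu (one_sub_conj_mul_ne_zero hu.le h1)
      (one_sub_conj_mul_ne_zero hu.le h2)]
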